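/- arXiv:1505.00531 — 5 statements merged into one kernel-verified Lean document; each statement's English description precedes it below -/
import Mathlib

section
/- Let η ∈ ℝ and let F : ℝ³ → ℝ³ be the Baiti–Jenssen flux with parameter η. Then F is differentiable at every point, and for every U = (u,v,w) ∈ ℝ³ the derivative of F at U applied to the vector r₁(U) = (1, 0, v) equals λ₁(U) · r₁(U), where λ₁(u,v,w) = 2η(w − (v−2)u) − 4. That is, (fderiv F U)(1,0,v) = (2η(w − (v−2)u) − 4) • (1,0,v), so r₁(U) is an eigenvector of the Jacobian of F at U with eigenvalue λ₁(U). -/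
/-- The Baiti–Jenssen flux with parameter `η`. -/
noncomputable def BJflux (η : ℝ) : ℝ × ℝ × ℝ → ℝ × ℝ × ℝ :=
  fun U =>
    (4 * ((U.2.1 - 1) * U.1 - U.2.2) + 2 * η * (U.1 * U.2.2 - U.1 ^ 2 * (U.2.1 - 1)),
     U.2.1 ^ 2,
     4 * (U.2.1 * (U.2.1 - 2) * U.1 - (U.2.1 - 1) * U.2.2)
       + η * (U.2.2 ^ 2 - U.1 ^ 2 * (U.2.1 - 2) * U.2.1))

/-!
`F` is polynomial, hence differentiable. The point is that `F` maps the line through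
`U = (u, v, w)` in direction `r₁ = (1, 0, v)` into the line through `F U` in the same direction:
`F (U + t r₁) = F U + (λ₁ t + 2η t²) r₁`. Differentiating at `t = 0` gives `DF(U) r₁ = λ₁ r₁`.
-/

theorem differentiable_BJflux (η : ℝ) : Differentiable ℝ (BJflux η) := by
  unfold BJflux
  fun_prop

theorem BJflux_add_smul_r1 (η u v w t : ℝ) :
    BJflux η ((u, v, w) + t • ((1 : ℝ), (0 : ℝ), v)) =
      BJflux η (u, v, w) +
        ((2 * η * (w - (v - 2) * u) - 4) * t + 2 * η * t ^ 2) • ((1 : ℝ), (0 : ℝ), v) := by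
  simp only [BJflux, Prod.smul_mk, Prod.mk_add_mk, smul_eq_mul, Prod.mk.injEq]
  refine ⟨by ring, by ring, by ring⟩

theorem hasDerivAt_add_quadratic_smul {𝕜 E : Type*} [NontriviallyNormedField 𝕜]
    [NormedAddCommGroup E] [NormedSpace 𝕜 E] (c r : E) (a b : 𝕜) :
    HasDerivAt (fun t : 𝕜 => c + (a * t + b * t ^ 2) • r) (a • r) 0 := by
  have hpoly : HasDerivAt (fun t : 𝕜 => a * t + b * t ^ 2) a 0 :=
    (((hasDerivAt_id' 0).const_mul a).add (((hasDerivAt_id' 0).pow 2).const_mul b)).congr_deriv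
      (by simp)
  exact (hpoly.smul_const r).const_add c

theorem bj_r1_eigenvector (η : ℝ) :
    (∀ U : ℝ × ℝ × ℝ, DifferentiableAt ℝ (BJflux η) U) ∧
    ∀ u v w : ℝ,
      fderiv ℝ (BJflux η) (u, v, w) ((1 : ℝ), (0 : ℝ), v) =
        (2 * η * (w - (v - 2) * u) - 4) • ((1 : ℝ), (0 : ℝ), v) := by
  refine ⟨differentiable_BJflux η, fun u v w => ?_⟩
  rw [← (differentiable_BJflux η _).lineDeriv_eq_fderiv]
  apply HasLineDerivAt.lineDeriv
  unfold HasLineDerivAt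
  simp_rw [BJflux_add_smul_r1]
  exact hasDerivAt_add_quadratic_smul _ _ _ _
end

section
/- Let η ∈ ℝ, let F : ℝ³ → ℝ³ be the Baiti–Jenssen flux with parameter η, and for U = (u,v,w) ∈ ℝ³ let J(U) denote the 3×3 real matrix whose (i,j) entry is the partial derivative of the i-th component of F with respect to the j-th variable at U (the Jacobian matrix of F at U). Then the characteristic polynomial of J(U) equals (X − λ₁(U)) (X − λ₂(U)) (X − λ₃(U)), where λ₁(u,v,w) = 2η(w − (v−2)u) − 4, λ₂(u,v,w) = 2v, λ₃(u,v,w) = 2η(w − vu) + 4. In particular λ₂(U) = 2v is an eigenvalue of J(U). -/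
open Polynomial

/-- The components of a vector of `ℝ × ℝ × ℝ`, indexed by `Fin 3`. -/
def comp3 (U : ℝ × ℝ × ℝ) : Fin 3 → ℝ := ![U.1, U.2.1, U.2.2]

/-- The standard basis vectors of `ℝ × ℝ × ℝ`, indexed by `Fin 3`. -/
def basis3 : Fin 3 → ℝ × ℝ × ℝ := ![(1, 0, 0), (0, 1, 0), (0, 0, 1)]

/-- The Jacobian matrix of the Baiti–Jenssen flux at a point `U`: its `(i,j)` entry is
the partial derivative of the `i`-th component of the flux with respect to the `j`-th
variable at `U`. -/
noncomputable def BJjacobian (η : ℝ) (U : ℝ × ℝ × ℝ) : Matrix (Fin 3) (Fin 3) ℝ :=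
  Matrix.of fun i j => fderiv ℝ (fun X => comp3 (BJflux η X) i) U (basis3 j)

/-!
The flux is polynomial, so each Jacobian entry is a directional derivative of a polynomial along
a coordinate axis. The middle row of the Jacobian is `(0, 2v, 0)`, so expanding `det (X - J)` along
it splits off `X - 2v`, and the remaining `2 × 2` block has trace `λ₁ + λ₃` and determinant
`λ₁ λ₃`. Since `2v` is a root of the characteristic polynomial, `J - 2v` is singular over the
domain `ℝ` and so has a nonzero kernel vector.
-/

theorem Matrix.exists_mulVec_eq_smul_of_isRoot_charpoly {n A : Type*} [Fintype n] [DecidableEq n]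
    [CommRing A] [IsDomain A] (M : Matrix n n A) {μ : A} (hμ : M.charpoly.IsRoot μ) :
    ∃ x : n → A, x ≠ 0 ∧ M.mulVec x = μ • x := by
  have hdet : (Matrix.scalar n μ - M).det = 0 := by rwa [← Matrix.eval_charpoly]
  obtain ⟨x, hx0, hx⟩ := Matrix.exists_mulVec_eq_zero_iff.2 hdet
  refine ⟨x, hx0, ?_⟩
  rw [Matrix.sub_mulVec, sub_eq_zero] at hx
  simpa using hx.symm

theorem differentiable_comp3_BJflux (η : ℝ) (i : Fin 3) :
    Differentiable ℝ fun X => comp3 (BJflux η X) i := by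
  fin_cases i <;> simp [comp3, BJflux] <;> fun_prop

theorem BJjacobian_apply (η : ℝ) (U : ℝ × ℝ × ℝ) (i j : Fin 3) :
    BJjacobian η U i j = lineDeriv ℝ (fun X => comp3 (BJflux η X) i) U (basis3 j) :=
  ((differentiable_comp3_BJflux η i) U).lineDeriv_eq_fderiv.symm

theorem BJjacobian_eq (η u v w : ℝ) :
    BJjacobian η (u, v, w) =
      !![4*(v-1) + 2*η*(w - 2*u*(v-1)), 4*u - 2*η*u^2, -4 + 2*η*u;
         0, 2*v, 0;
         4*v*(v-2) - 2*η*u*(v-2)*v, 4*((2*v-2)*u - w) - η*u^2*(2*v-2), -4*(v-1) + 2*η*w] := by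
  ext i j
  rw [BJjacobian_apply]
  fin_cases i <;> fin_cases j <;>
    simp (disch := fun_prop) [lineDeriv, basis3, comp3, BJflux] <;> ring

theorem charpoly_BJjacobian (η u v w : ℝ) :
    (BJjacobian η (u, v, w)).charpoly =
      (X - C (2 * η * (w - (v - 2) * u) - 4)) * (X - C (2 * v))
        * (X - C (2 * η * (w - v * u) + 4)) := by
  rw [BJjacobian_eq, Matrix.charpoly, Matrix.det_fin_three]
  simp [map_ofNat]
  ring

theorem bj_charpoly (η : ℝ) (u v w : ℝ) :
    (BJjacobian η (u, v, w)).charpoly =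
      (X - C (2 * η * (w - (v - 2) * u) - 4)) * (X - C (2 * v))
        * (X - C (2 * η * (w - v * u) + 4)) ∧
    ∃ x : Fin 3 → ℝ, x ≠ 0 ∧ (BJjacobian η (u, v, w)).mulVec x = (2 * v) • x := by
  refine ⟨charpoly_BJjacobian η u v w, Matrix.exists_mulVec_eq_smul_of_isRoot_charpoly _ ?_⟩
  simp [charpoly_BJjacobian]
end

section
/- Let η ∈ ℝ and let F : ℝ³ → ℝ³ be the Baiti–Jenssen flux with parameter η. For every U = (u,v,w) ∈ ℝ³ and every s ∈ ℝ, setting U⁺ = U + s • r₁(U) with r₁(U) = (1,0,v), the Rankine–Hugoniot condition holds along the straight line through U in direction r₁(U) with speed σ = λ₁(U) + 2ηs: F(U⁺) − F(U) = σ • (U⁺ − U), where λ₁(u,v,w) = 2η(w − (v−2)u) − 4. Thus 1-shock curves of the Baiti–Jenssen system are straight lines in the direction r₁. -/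
theorem bj_rh_1shock (η : ℝ) (u v w s : ℝ) :
    BJflux η ((u, v, w) + s • ((1 : ℝ), (0 : ℝ), v)) - BJflux η (u, v, w) =
      ((2 * η * (w - (v - 2) * u) - 4) + 2 * η * s) •
        (((u, v, w) + s • ((1 : ℝ), (0 : ℝ), v)) - (u, v, w)) := by
  simp only [BJflux, Prod.smul_mk, Prod.mk_add_mk, Prod.mk_sub_mk, smul_eq_mul]
  refine Prod.ext ?_ (Prod.ext ?_ ?_) <;> simp <;> ring
end

section
/- Let η ∈ ℝ and let F : ℝ³ → ℝ³ be the Baiti–Jenssen flux with parameter η. For every U = (u,v,w) ∈ ℝ³ and every s ∈ ℝ, setting U⁺ = U + s • r₃(U) with r₃(U) = (1,0,v−2), the Rankine–Hugoniot condition holds along the straight line through U in direction r₃(U) with speed σ = λ₃(U) − 2ηs: F(U⁺) − F(U) = σ • (U⁺ − U), where λ₃(u,v,w) = 2η(w − vu) + 4. Thus 3-shock curves of the Baiti–Jenssen system are straight lines in the direction r₃. -/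
theorem bj_rh_3shock (η : ℝ) (u v w s : ℝ) :
    BJflux η ((u, v, w) + s • ((1 : ℝ), (0 : ℝ), v - 2)) - BJflux η (u, v, w) =
      ((2 * η * (w - v * u) + 4) - 2 * η * s) •
        (((u, v, w) + s • ((1 : ℝ), (0 : ℝ), v - 2)) - (u, v, w)) := by
  simp only [BJflux, Prod.smul_mk, Prod.mk_add_mk, Prod.mk_sub_mk, smul_eq_mul]
  refine Prod.ext ?_ (Prod.ext ?_ ?_) <;> simp <;> ring
end

section
/- Let u⁻ < u⁺ be real numbers, let R be the rarefaction wave (R(s,y) = u⁻ if y ≤ s u⁻, y/s if s u⁻ < y < s u⁺, u⁺ if y ≥ s u⁺, for s > 0), and define the compression wave C(t,x) = R(1−t, −x) for 0 < t < 1 and x ∈ ℝ. Then: (i) C is a distributional solution of Burgers' equation on (0,1) × ℝ, i.e., ∬ ( C ∂_t φ + (C²/2) ∂_x φ ) dx dt = 0 for every smooth compactly supported φ with support in (0,1) × ℝ; (ii) for every t ∈ (0,1) and all a ≤ b, −(b − a)/(1 − t) ≤ C(t,b) − C(t,a) ≤ 0, so x ↦ C(t,x) is nonincreasing and Lipschitz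 with constant 1/(1−t). -/
open MeasureTheory Set

/-- The rarefaction wave solving Burgers' equation, for `s > 0`, with left state `um`
and right state `up`. -/
noncomputable def rarefaction (um up : ℝ) (s y : ℝ) : ℝ :=
  if y ≤ s * um then um else if y < s * up then y / s else up

/-- The compression wave associated to the rarefaction wave, for `0 < t < 1`. -/
noncomputable def compression (um up : ℝ) (t x : ℝ) : ℝ :=
  rarefaction um up (1 - t) (-x)

lemma max_lip (c u v : ℝ) : |max c u - max c v| ≤ |u - v| := by
  rcases max_cases c u with ⟨h1, h2⟩ | ⟨h1, h2⟩ <;> rw [h1] <;>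
    rcases max_cases c v with ⟨h3, h4⟩ | ⟨h3, h4⟩ <;> rw [h3] <;>
    rw [abs_sub_le_iff] <;>
    constructor <;> nlinarith [le_abs_self (u - v), neg_abs_le (u - v)]

lemma min_lip (c u v : ℝ) : |min c u - min c v| ≤ |u - v| := by
  rcases min_cases c u with ⟨h1, h2⟩ | ⟨h1, h2⟩ <;> rw [h1] <;>
    rcases min_cases c v with ⟨h3, h4⟩ | ⟨h3, h4⟩ <;> rw [h3] <;>
    rw [abs_sub_le_iff] <;>
    constructor <;> nlinarith [le_abs_self (u - v), neg_abs_le (u - v)]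

lemma clamp_lip (um up u v : ℝ) : |max um (min up u) - max um (min up v)| ≤ |u - v| :=
  le_trans (max_lip um _ _) (min_lip up u v)

lemma comp_eq {um up : ℝ} (h : um < up) {t : ℝ} (ht : t < 1) (x : ℝ) :
    compression um up t x = max um (min up (-x / (1 - t))) := by
  have hs : (0:ℝ) < 1 - t := by linarith
  unfold compression rarefaction
  split_ifs with h1 h2
  · have hd : -x / (1 - t) ≤ um := (div_le_iff₀ hs).2 (by linarith [h1])
    rw [min_eq_right (le_trans hd h.le), max_eq_left hd]
  · push_neg at h1
    have hd1 : um < -x / (1 - t) := (lt_div_iff₀ hs).2 (by linarith [h1])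
    have hd2 : -x / (1 - t) < up := (div_lt_iff₀ hs).2 (by linarith [h2])
    rw [min_eq_right hd2.le, max_eq_right hd1.le]
  · push_neg at h1 h2
    have hd : up ≤ -x / (1 - t) := (le_div_iff₀ hs).2 (by linarith [h2])
    rw [min_eq_left hd, max_eq_right h.le]


lemma ftc1 {g f' : ℝ → ℝ} {α β : ℝ} (c : ℝ) (hαβ : α ≤ β)
    (hcont : ContinuousOn g (Icc α β))
    (hint : IntervalIntegrable f' volume α β)
    (hd : ∀ t ∈ Ioo α β, t ≠ c → HasDerivAt g (f' t) t) :
    ∫ y in α..β, f' y = g β - g α := by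
  by_cases hc : c ∈ Ioo α β
  · have h1 : IntervalIntegrable f' volume α c :=
      hint.mono_set (by rw [uIcc_of_le hαβ, uIcc_of_le hc.1.le]; exact Icc_subset_Icc le_rfl hc.2.le)
    have h2 : IntervalIntegrable f' volume c β :=
      hint.mono_set (by rw [uIcc_of_le hαβ, uIcc_of_le hc.2.le]; exact Icc_subset_Icc hc.1.le le_rfl)
    rw [← intervalIntegral.integral_add_adjacent_intervals h1 h2,
      intervalIntegral.integral_eq_sub_of_hasDeriv_right_of_le hc.1.le
        (hcont.mono (Icc_subset_Icc le_rfl hc.2.le))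
        (fun t ht => (hd t ⟨ht.1, ht.2.trans hc.2⟩ (ne_of_lt ht.2)).hasDerivWithinAt) h1,
      intervalIntegral.integral_eq_sub_of_hasDeriv_right_of_le hc.2.le
        (hcont.mono (Icc_subset_Icc hc.1.le le_rfl))
        (fun t ht => (hd t ⟨hc.1.trans ht.1, ht.2⟩ (ne_of_gt ht.1)).hasDerivWithinAt) h2]
    ring
  · exact intervalIntegral.integral_eq_sub_of_hasDeriv_right_of_le hαβ hcont
      (fun t ht => (hd t ht (fun he => hc (he ▸ ht))).hasDerivWithinAt) hint

lemma ftc2 {g f' : ℝ → ℝ} {α β : ℝ} (c d : ℝ) (hαβ : α ≤ β)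
    (hcont : ContinuousOn g (Icc α β))
    (hint : IntervalIntegrable f' volume α β)
    (hd : ∀ t ∈ Ioo α β, t ≠ c → t ≠ d → HasDerivAt g (f' t) t) :
    ∫ y in α..β, f' y = g β - g α := by
  by_cases hdm : d ∈ Ioo α β
  · have h1 : IntervalIntegrable f' volume α d :=
      hint.mono_set (by rw [uIcc_of_le hαβ, uIcc_of_le hdm.1.le]; exact Icc_subset_Icc le_rfl hdm.2.le)
    have h2 : IntervalIntegrable f' volume d β :=
      hint.mono_set (by rw [uIcc_of_le hαβ, uIcc_of_le hdm.2.le]; exact Icc_subset_Icc hdm.1.le le_rfl)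
    rw [← intervalIntegral.integral_add_adjacent_intervals h1 h2,
      ftc1 c hdm.1.le (hcont.mono (Icc_subset_Icc le_rfl hdm.2.le)) h1
        (fun t ht htc => hd t ⟨ht.1, ht.2.trans hdm.2⟩ htc (ne_of_lt ht.2)),
      ftc1 c hdm.2.le (hcont.mono (Icc_subset_Icc hdm.1.le le_rfl)) h2
        (fun t ht htc => hd t ⟨hdm.1.trans ht.1, ht.2⟩ htc (ne_of_gt ht.1))]
    ring
  · exact ftc1 c hαβ hcont hint (fun t ht htc => hd t ht htc (fun he => hdm (he ▸ ht)))

noncomputable def ctFun (um up : ℝ) (p : ℝ × ℝ) : ℝ :=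
  if (1 - p.1) * um < -p.2 ∧ -p.2 < (1 - p.1) * up then -p.2 / (1 - p.1) ^ 2 else 0

lemma comp_def (um up t x : ℝ) :
    compression um up t x =
      if -x ≤ (1 - t) * um then um else if -x < (1 - t) * up then -x / (1 - t) else up := rfl

lemma ctFun_meas (um up : ℝ) : Measurable (ctFun um up) := by
  unfold ctFun
  refine Measurable.ite ?_ (by fun_prop) measurable_const
  have :  {p : ℝ × ℝ | (1 - p.1) * um < -p.2 ∧ -p.2 < (1 - p.1) * up} =
      {p : ℝ × ℝ | (1 - p.1) * um < -p.2} ∩ {p : ℝ × ℝ | -p.2 < (1 - p.1) * up} := rfl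
  rw [show (fun p : ℝ × ℝ => (1 - p.1) * um < -p.2 ∧ -p.2 < (1 - p.1) * up) =
      ({p : ℝ × ℝ | (1 - p.1) * um < -p.2} ∩ {p : ℝ × ℝ | -p.2 < (1 - p.1) * up} : Set (ℝ × ℝ)) from rfl]
  exact MeasurableSet.inter
    (measurableSet_lt (f := fun p : ℝ × ℝ => (1 - p.1) * um) (by fun_prop) (by fun_prop))
    (measurableSet_lt (f := fun p : ℝ × ℝ => -p.2) (by fun_prop) (by fun_prop))

lemma ctFun_bound {um up : ℝ} (h : um < up) {b R : ℝ} (hb : b < 1)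
    {p : ℝ × ℝ} (hp1 : p.1 ≤ b) (hp2 : |p.2| ≤ R) :
    |ctFun um up p| ≤ R / (1 - b) ^ 2 := by
  have hR : 0 ≤ R := le_trans (abs_nonneg _) hp2
  have hb0 : (0:ℝ) < 1 - b := by linarith
  unfold ctFun
  split_ifs with hc
  · have h1 : 0 < 1 - p.1 := by nlinarith [hc.1, hc.2]
    rw [abs_div, abs_neg, abs_of_nonneg (sq_nonneg (1 - p.1) : (0:ℝ) ≤ (1-p.1)^2)]
    exact div_le_div₀ hR hp2 (by positivity) (by nlinarith)
  · simpa using by positivity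

lemma hasDerivAt_comp_t {um up : ℝ} (h : um < up) {t x : ℝ} (ht : t < 1)
    (h1 : -x = (1 - t) * um → um = 0) (h2 : -x = (1 - t) * up → up = 0) :
    HasDerivAt (fun t' => compression um up t' x) (ctFun um up (t, x)) t := by
  have hs : (0:ℝ) < 1 - t := by linarith
  rcases lt_trichotomy (-x) ((1 - t) * um) with hlt | heq | hgt
  · -- region I : constant um
    have hz : ctFun um up (t, x) = 0 := by
      unfold ctFun; rw [if_neg]; push_neg; intro hc; linarith
    have hev : (fun t' => compression um up t' x) =ᶠ[nhds t] fun _ => um := by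
      have hopen : IsOpen {t' : ℝ | -x < (1 - t') * um} :=
        isOpen_lt continuous_const ((continuous_const.sub continuous_id).mul continuous_const)
      filter_upwards [hopen.mem_nhds hlt] with t' ht'
      rw [comp_def, if_pos (le_of_lt ht')]
    rw [hz]
    exact (hasDerivAt_const t um).congr_of_eventuallyEq hev
  · -- boundary : um = 0, x = 0, constant um
    have hum : um = 0 := h1 heq
    have hx : -x = 0 := by rw [heq, hum, mul_zero]
    have hz : ctFun um up (t, x) = 0 := by
      unfold ctFun; rw [if_neg]; push_neg; intro hc; exfalso
      rw [hum, mul_zero] at hc; simp only at hc; linarith [hx ▸ hc]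
    have hev : (fun t' => compression um up t' x) =ᶠ[nhds t] fun _ => um := by
      filter_upwards [isOpen_Iio.mem_nhds ht] with t' _
      rw [comp_def, if_pos (by rw [hx, hum, mul_zero])]
    rw [hz]
    exact (hasDerivAt_const t um).congr_of_eventuallyEq hev
  · rcases lt_trichotomy (-x) ((1 - t) * up) with hlt2 | heq2 | hgt2
    · -- region II
      have hz : ctFun um up (t, x) = -x / (1 - t) ^ 2 := by
        unfold ctFun; rw [if_pos ⟨hgt, hlt2⟩]
      have hev : (fun t' => compression um up t' x) =ᶠ[nhds t] fun t' => -x / (1 - t') := by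
        have hopen : IsOpen {t' : ℝ | (1 - t') * um < -x ∧ -x < (1 - t') * up} := by
          rw [show {t' : ℝ | (1 - t') * um < -x ∧ -x < (1 - t') * up} =
              {t' : ℝ | (1 - t') * um < -x} ∩ {t' : ℝ | -x < (1 - t') * up} from rfl]
          exact (isOpen_lt ((continuous_const.sub continuous_id).mul continuous_const)
              continuous_const).inter
            (isOpen_lt continuous_const ((continuous_const.sub continuous_id).mul continuous_const))
        filter_upwards [hopen.mem_nhds ⟨hgt, hlt2⟩] with t' ht'
        rw [comp_def, if_neg (not_le.2 ht'.1), if_pos ht'.2]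
      have hder : HasDerivAt (fun t' : ℝ => -x / (1 - t')) (-x / (1 - t) ^ 2) t := by
        have hd : HasDerivAt (fun t' : ℝ => 1 - t') (-1) t := by
          simpa using (hasDerivAt_id t).const_sub 1
        have : HasDerivAt (fun t' : ℝ => -x / (1 - t')) ((0 * (1 - t) - -x * -1) / (1 - t) ^ 2) t :=
          (hasDerivAt_const t (-x)).div hd (by linarith : (1:ℝ) - t ≠ 0)
        convert this using 1
        ring
      rw [hz]
      exact hder.congr_of_eventuallyEq hev
    · -- boundary : up = 0, x = 0, constant up
      have hup : up = 0 := h2 heq2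
      have hx : -x = 0 := by rw [heq2, hup, mul_zero]
      have hgt0 : (1 - t) * um < 0 := by rw [← hx]; exact hgt
      have humneg : um < 0 := by nlinarith
      have hz : ctFun um up (t, x) = 0 := by
        unfold ctFun; rw [if_neg]; push_neg; intro _
        rw [hup, mul_zero]; simp only; linarith [hx]
      have hev : (fun t' => compression um up t' x) =ᶠ[nhds t] fun _ => up := by
        filter_upwards [isOpen_Iio.mem_nhds ht] with t' ht'
        have h1t : (0:ℝ) < 1 - t' := by simpa using ht'
        rw [comp_def, if_neg (by rw [hx]; push_neg; nlinarith),
          if_neg (by rw [hx, hup, mul_zero]; simp)]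
      rw [hz]
      exact (hasDerivAt_const t up).congr_of_eventuallyEq hev
    · -- region III : constant up
      have hz : ctFun um up (t, x) = 0 := by
        unfold ctFun; rw [if_neg]; push_neg; intro _; linarith
      have hev : (fun t' => compression um up t' x) =ᶠ[nhds t] fun _ => up := by
        have hopen : IsOpen ({t' : ℝ | (1 - t') * up < -x} ∩ Iio 1) :=
          (isOpen_lt ((continuous_const.sub continuous_id).mul continuous_const)
            continuous_const).inter isOpen_Iio
        filter_upwards [hopen.mem_nhds ⟨hgt2, ht⟩] with t' ht'
        have h1t : (0:ℝ) < 1 - t' := by have := ht'.2; simp at this; linarith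
        have hmm : (1 - t') * um < (1 - t') * up := by nlinarith
        have hq : (1 - t') * up < -x := ht'.1
        rw [comp_def, if_neg (by push_neg; linarith), if_neg (by push_neg; linarith)]
      rw [hz]
      exact (hasDerivAt_const t up).congr_of_eventuallyEq hev

lemma hasDerivAt_comp_x {um up : ℝ} (h : um < up) {t x : ℝ} (ht : t < 1)
    (h1 : -x ≠ (1 - t) * um) (h2 : -x ≠ (1 - t) * up) :
    HasDerivAt (fun x' => (compression um up t x') ^ 2 / 2) (-ctFun um up (t, x)) x := by
  have hs : (0:ℝ) < 1 - t := by linarith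
  rcases lt_trichotomy (-x) ((1 - t) * um) with hlt | heq | hgt
  · have hz : -ctFun um up (t, x) = 0 := by
      unfold ctFun; rw [if_neg]; · simp
      push_neg; intro hc; linarith
    have hev : (fun x' => (compression um up t x') ^ 2 / 2) =ᶠ[nhds x]
        fun _ => um ^ 2 / 2 := by
      have hopen : IsOpen {x' : ℝ | -x' < (1 - t) * um} :=
        isOpen_lt continuous_neg continuous_const
      filter_upwards [hopen.mem_nhds hlt] with x' hx'
      rw [comp_def, if_pos (le_of_lt hx')]
    rw [hz]
    exact (hasDerivAt_const x (um ^ 2 / 2)).congr_of_eventuallyEq hev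
  · exact absurd heq h1
  · rcases lt_trichotomy (-x) ((1 - t) * up) with hlt2 | heq2 | hgt2
    · have hz : -ctFun um up (t, x) = x / (1 - t) ^ 2 := by
        unfold ctFun; rw [if_pos ⟨hgt, hlt2⟩]; ring
      have hev : (fun x' => (compression um up t x') ^ 2 / 2) =ᶠ[nhds x]
          fun x' => (-x' / (1 - t)) ^ 2 / 2 := by
        have hopen : IsOpen {x' : ℝ | (1 - t) * um < -x' ∧ -x' < (1 - t) * up} := by
          rw [show {x' : ℝ | (1 - t) * um < -x' ∧ -x' < (1 - t) * up} =
              {x' : ℝ | (1 - t) * um < -x'} ∩ {x' : ℝ | -x' < (1 - t) * up} from rfl]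
          exact (isOpen_lt continuous_const continuous_neg).inter
            (isOpen_lt continuous_neg continuous_const)
        filter_upwards [hopen.mem_nhds ⟨hgt, hlt2⟩] with x' hx'
        rw [comp_def, if_neg (not_le.2 hx'.1), if_pos hx'.2]
      have hder : HasDerivAt (fun x' : ℝ => (-x' / (1 - t)) ^ 2 / 2) (x / (1 - t) ^ 2) x := by
        have hd : HasDerivAt (fun x' : ℝ => -x' / (1 - t)) (-1 / (1 - t)) x :=
          (hasDerivAt_id x).neg.div_const (1 - t)
        have : HasDerivAt (fun x' : ℝ => (-x' / (1 - t)) ^ 2 / 2)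
            (((2:ℕ):ℝ) * (-x / (1 - t)) ^ (2 - 1) * (-1 / (1 - t)) / 2) x := (hd.pow 2).div_const 2
        convert this using 1
        have : (1 - t) ≠ 0 := by linarith
        norm_num
        field_simp
      rw [hz]
      exact hder.congr_of_eventuallyEq hev
    · exact absurd heq2 h2
    · have hz : -ctFun um up (t, x) = 0 := by
        unfold ctFun; rw [if_neg]; · simp
        push_neg; intro _; linarith
      have hev : (fun x' => (compression um up t x') ^ 2 / 2) =ᶠ[nhds x]
          fun _ => up ^ 2 / 2 := by
        have hopen : IsOpen {x' : ℝ | (1 - t) * up < -x'} :=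
          isOpen_lt continuous_const continuous_neg
        filter_upwards [hopen.mem_nhds hgt2] with x' hx'
        have hq : (1 - t) * up < -x' := hx'
        have hmm : (1 - t) * um < (1 - t) * up := by nlinarith
        rw [comp_def, if_neg (by push_neg; linarith), if_neg (by push_neg; linarith)]
      rw [hz]
      exact (hasDerivAt_const x (up ^ 2 / 2)).congr_of_eventuallyEq hev

lemma comp_contOn_t {um up : ℝ} (h : um < up) (x : ℝ) :
    ContinuousOn (fun t => compression um up t x) (Iio 1) := by
  refine ContinuousOn.congr (f := fun t => max um (min up (-x / (1 - t)))) ?_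
    (fun t ht => comp_eq h ht x)
  refine (continuous_const.max (continuous_const.min continuous_id)).comp_continuousOn ?_
  exact ContinuousOn.div continuousOn_const
    (continuous_const.sub continuous_id).continuousOn
    (fun t ht => by simp only [mem_Iio] at ht; intro hc; have : (1:ℝ) - t = 0 := hc; linarith)

lemma comp_cont_x {um up : ℝ} (h : um < up) {t : ℝ} (ht : t < 1) :
    Continuous (fun x => compression um up t x) := by
  have hs : (0:ℝ) < 1 - t := by linarith
  rw [show (fun x => compression um up t x) = fun x => max um (min up (-x / (1 - t))) from
    funext fun x => comp_eq h ht x]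
  exact continuous_const.max (continuous_const.min (continuous_neg.div_const _))

lemma comp_contOn {um up : ℝ} (h : um < up) :
    ContinuousOn (fun p : ℝ × ℝ => compression um up p.1 p.2) {p : ℝ × ℝ | p.1 < 1} := by
  refine ContinuousOn.congr (f := fun p : ℝ × ℝ => max um (min up (-p.2 / (1 - p.1)))) ?_
    (fun p hp => comp_eq h hp p.2)
  refine (continuous_const.max (continuous_const.min continuous_id)).comp_continuousOn ?_
  exact ContinuousOn.div continuous_snd.neg.continuousOn
    (continuous_const.sub continuous_fst).continuousOn
    (fun p hp => by simp only [mem_setOf_eq] at hp; intro hc; have : (1:ℝ) - p.1 = 0 := hc; linarith)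


theorem compression_wave_properties (um up : ℝ) (h : um < up) :
    (∀ φ : ℝ × ℝ → ℝ, ContDiff ℝ (⊤ : ℕ∞) φ → HasCompactSupport φ →
      tsupport φ ⊆ Set.Ioo (0 : ℝ) 1 ×ˢ (Set.univ : Set ℝ) →
      ∫ p : ℝ × ℝ,
          (compression um up p.1 p.2 * fderiv ℝ φ p ((1 : ℝ), (0 : ℝ))
            + (compression um up p.1 p.2) ^ 2 / 2 * fderiv ℝ φ p ((0 : ℝ), (1 : ℝ))) = 0) ∧
    (∀ t : ℝ, t ∈ Set.Ioo (0 : ℝ) 1 → ∀ a b : ℝ, a ≤ b →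
      -((b - a) / (1 - t)) ≤ compression um up t b - compression um up t a ∧
      compression um up t b - compression um up t a ≤ 0) ∧
    (∀ t : ℝ, t ∈ Set.Ioo (0 : ℝ) 1 →
      Antitone (fun x => compression um up t x) ∧
      ∀ x y : ℝ, |compression um up t x - compression um up t y| ≤ (1 / (1 - t)) * |x - y|) := by
  have part2 : ∀ t : ℝ, t ∈ Set.Ioo (0:ℝ) 1 → ∀ a b : ℝ, a ≤ b →
      -((b - a) / (1 - t)) ≤ compression um up t b - compression um up t a ∧
      compression um up t b - compression um up t a ≤ 0 := by
    intro t ht a b hab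
    have ht1 : t < 1 := ht.2
    have hs : (0:ℝ) < 1 - t := by linarith
    rw [comp_eq h ht1 a, comp_eq h ht1 b]
    constructor
    · have key := clamp_lip um up (-b / (1 - t)) (-a / (1 - t))
      have e : -b / (1 - t) - -a / (1 - t) = -((b - a) / (1 - t)) := by ring
      rw [e, abs_neg, abs_div, abs_of_nonneg (by linarith : (0:ℝ) ≤ b - a), abs_of_pos hs] at key
      exact (abs_le.1 key).1
    · have hdd : -b / (1 - t) ≤ -a / (1 - t) :=
        (div_le_div_iff_of_pos_right hs).2 (by linarith)
      exact sub_nonpos.2 (max_le_max le_rfl (min_le_min le_rfl hdd))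
  have part3 : ∀ t : ℝ, t ∈ Set.Ioo (0:ℝ) 1 →
      Antitone (fun x => compression um up t x) ∧
      ∀ x y : ℝ, |compression um up t x - compression um up t y| ≤ (1 / (1 - t)) * |x - y| := by
    intro t ht
    have hs : (0:ℝ) < 1 - t := by linarith [ht.2]
    constructor
    · intro x y hxy
      exact sub_nonpos.1 (part2 t ht x y hxy).2
    · intro x y
      rcases le_total x y with hxy | hxy
      · have hb := part2 t ht x y hxy
        have e2 : 1 / (1 - t) * |x - y| = (y - x) / (1 - t) := by
          rw [abs_sub_comm, abs_of_nonneg (by linarith : (0:ℝ) ≤ y - x)]; ring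
        rw [abs_sub_comm, abs_of_nonpos hb.2, e2]
        linarith [hb.1]
      · have hb := part2 t ht y x hxy
        have e2 : 1 / (1 - t) * |x - y| = (x - y) / (1 - t) := by
          rw [abs_of_nonneg (by linarith : (0:ℝ) ≤ x - y)]; ring
        rw [abs_of_nonpos hb.2, e2]
        linarith [hb.1]
  refine ⟨?_, part2, part3⟩

  intro φ hφ hφc hφs
  classical
  have hφcont : Continuous φ := hφ.continuous
  have hK : IsCompact (tsupport φ) := hφc
  have hfd : Continuous (fderiv ℝ φ) := (hφ.fderiv_right (m := (⊤ : ℕ∞)) (by simp)).continuous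
  have hdphit_cont : Continuous fun p : ℝ × ℝ => fderiv ℝ φ p ((1:ℝ), (0:ℝ)) :=
    ((ContinuousLinearMap.apply ℝ ℝ ((1:ℝ), (0:ℝ))).continuous).comp hfd
  have hdphix_cont : Continuous fun p : ℝ × ℝ => fderiv ℝ φ p ((0:ℝ), (1:ℝ)) :=
    ((ContinuousLinearMap.apply ℝ ℝ ((0:ℝ), (1:ℝ))).continuous).comp hfd
  have hφ0 : ∀ p : ℝ × ℝ, p ∉ tsupport φ → φ p = 0 :=
    fun p hp => image_eq_zero_of_notMem_tsupport hp
  have hdφ0 : ∀ p : ℝ × ℝ, p ∉ tsupport φ → fderiv ℝ φ p = 0 :=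
    fun p hp => Function.notMem_support.1 fun hc => hp (support_fderiv_subset ℝ hc)
  -- bounds on the support
  have hAc : IsCompact ((Prod.fst '' tsupport φ) ∪ {(1:ℝ)/2}) :=
    (hK.image continuous_fst).union isCompact_singleton
  have hAne : ((Prod.fst '' tsupport φ) ∪ {(1:ℝ)/2}).Nonempty := ⟨1/2, Or.inr rfl⟩
  have hAsub : ((Prod.fst '' tsupport φ) ∪ {(1:ℝ)/2}) ⊆ Set.Ioo 0 1 := by
    rintro y (⟨p, hp, rfl⟩ | hy)
    · exact (hφs hp).1
    · rw [mem_singleton_iff] at hy; subst hy; constructor <;> norm_num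
  obtain ⟨a, b, ha, hb, hKt⟩ : ∃ a b : ℝ, a ∈ Set.Ioo (0:ℝ) 1 ∧ b ∈ Set.Ioo (0:ℝ) 1 ∧
      ∀ p : ℝ × ℝ, p ∈ tsupport φ → a ≤ p.1 ∧ p.1 ≤ b := by
    refine ⟨sInf _, sSup _, hAsub (hAc.sInf_mem hAne), hAsub (hAc.sSup_mem hAne),
      fun p hp => ⟨csInf_le hAc.bddBelow (Or.inl ⟨p, hp, rfl⟩),
        le_csSup hAc.bddAbove (Or.inl ⟨p, hp, rfl⟩)⟩⟩
  obtain ⟨R0, hR0⟩ := hK.isBounded.subset_closedBall 0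
  obtain ⟨R, hRnn, hKx⟩ : ∃ R : ℝ, 0 ≤ R ∧ ∀ p : ℝ × ℝ, p ∈ tsupport φ → |p.2| ≤ R := by
    refine ⟨max R0 0, le_max_right _ _, fun p hp => ?_⟩
    have h1 : ‖p‖ ≤ R0 := by
      have := hR0 hp; rwa [Metric.mem_closedBall, dist_zero_right] at this
    calc |p.2| = ‖p.2‖ := (Real.norm_eq_abs _).symm
    _ ≤ ‖p‖ := norm_snd_le p
    _ ≤ max R0 0 := le_trans h1 (le_max_left _ _)
  set C0 : ℝ := R / (1 - b) ^ 2 with hC0def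
  set F1 : ℝ × ℝ → ℝ := fun p =>
    ctFun um up p * φ p + compression um up p.1 p.2 * fderiv ℝ φ p ((1:ℝ), (0:ℝ)) with hF1
  set F2 : ℝ × ℝ → ℝ := fun p =>
    -(ctFun um up p * φ p) + compression um up p.1 p.2 ^ 2 / 2 * fderiv ℝ φ p ((0:ℝ), (1:ℝ))
    with hF2
  -- pointwise bound for the ctFun term
  have hbnd : ∀ p : ℝ × ℝ, ‖ctFun um up p * φ p‖ ≤ C0 * ‖φ p‖ := by
    intro p
    by_cases hp : φ p = 0
    · simp [hp]
    · have hpK : p ∈ tsupport φ := subset_tsupport φ (Function.mem_support.2 hp)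
      have hct := ctFun_bound h hb.2 (hKt p hpK).2 (hKx p hpK)
      rw [norm_mul]
      exact mul_le_mul_of_nonneg_right (by rwa [Real.norm_eq_abs]) (norm_nonneg _)
  -- integrability
  have hgint : Integrable (fun p : ℝ × ℝ => C0 * ‖φ p‖) :=
    (hφcont.norm.integrable_of_hasCompactSupport hφc.norm).const_mul C0
  have hmeasCt : AEStronglyMeasurable (fun p : ℝ × ℝ => ctFun um up p * φ p) volume :=
    ((ctFun_meas um up).mul hφcont.measurable).aestronglyMeasurable
  have hCtφ : Integrable (fun p : ℝ × ℝ => ctFun um up p * φ p) :=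
    hgint.mono' hmeasCt (Filter.Eventually.of_forall hbnd)
  have hmul_cont : ∀ f g : ℝ × ℝ → ℝ, ContinuousOn f {p : ℝ × ℝ | p.1 < 1} → Continuous g →
      (∀ p, p ∉ tsupport φ → g p = 0) → Continuous fun p : ℝ × ℝ => f p * g p := by
    intro f g hf hg hg0
    rw [continuous_iff_continuousAt]
    intro p
    by_cases hp : p.1 < 1
    · exact (hf.continuousAt ((isOpen_lt continuous_fst continuous_const).mem_nhds hp)).mul
        hg.continuousAt
    · have hpK : p ∉ tsupport φ := fun hc => hp (hφs hc).1.2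
      have hev : (fun q : ℝ × ℝ => f q * g q) =ᶠ[nhds p] fun _ => 0 := by
        filter_upwards [hK.isClosed.isOpen_compl.mem_nhds hpK] with q hq
        rw [hg0 q hq, mul_zero]
      exact (continuousAt_congr hev).2 continuousAt_const
  have hdphit0 : ∀ p : ℝ × ℝ, p ∉ tsupport φ → fderiv ℝ φ p ((1:ℝ), (0:ℝ)) = 0 := by
    intro p hp; rw [hdφ0 p hp]; rfl
  have hdphix0 : ∀ p : ℝ × ℝ, p ∉ tsupport φ → fderiv ℝ φ p ((0:ℝ), (1:ℝ)) = 0 := by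
    intro p hp; rw [hdφ0 p hp]; rfl
  have hCd1int : Integrable
      (fun p : ℝ × ℝ => compression um up p.1 p.2 * fderiv ℝ φ p ((1:ℝ), (0:ℝ))) := by
    refine Continuous.integrable_of_hasCompactSupport
      (hmul_cont _ _ (comp_contOn h) hdphit_cont hdphit0) ?_
    exact HasCompactSupport.intro hK fun p hp => by rw [hdphit0 p hp, mul_zero]
  have hCd2int : Integrable
      (fun p : ℝ × ℝ => compression um up p.1 p.2 ^ 2 / 2 * fderiv ℝ φ p ((0:ℝ), (1:ℝ))) := by
    refine Continuous.integrable_of_hasCompactSupport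
      (hmul_cont _ _ (((comp_contOn h).pow 2).div_const 2) hdphix_cont hdphix0) ?_
    exact HasCompactSupport.intro hK fun p hp => by rw [hdphix0 p hp, mul_zero]
  have hF1int : Integrable F1 := hCtφ.add hCd1int
  have hF2int : Integrable F2 := hCtφ.neg.add hCd2int
  -- derivatives of slices of φ
  have hφdT : ∀ t x : ℝ, HasDerivAt (fun t' => φ (t', x)) (fderiv ℝ φ (t, x) ((1:ℝ), (0:ℝ))) t := by
    intro t x
    exact ((hφ.differentiable (by simp) (t, x)).hasFDerivAt).comp_hasDerivAt t
      ((hasDerivAt_id t).prodMk (hasDerivAt_const t x))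
  have hφdX : ∀ t x : ℝ, HasDerivAt (fun x' => φ (t, x')) (fderiv ℝ φ (t, x) ((0:ℝ), (1:ℝ))) x := by
    intro t x
    exact ((hφ.differentiable (by simp) (t, x)).hasFDerivAt).comp_hasDerivAt x
      ((hasDerivAt_const x t).prodMk (hasDerivAt_id x))
  have hφT : ∀ x : ℝ, Continuous fun t => φ (t, x) :=
    fun x => hφcont.comp (continuous_id.prodMk continuous_const)
  have hφX : ∀ t : ℝ, Continuous fun x => φ (t, x) :=
    fun t => hφcont.comp (continuous_const.prodMk continuous_id)
  have hdphitT : ∀ x : ℝ, Continuous fun t => fderiv ℝ φ (t, x) ((1:ℝ), (0:ℝ)) :=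
    fun x => hdphit_cont.comp (continuous_id.prodMk continuous_const)
  have hdphixX : ∀ t : ℝ, Continuous fun x => fderiv ℝ φ (t, x) ((0:ℝ), (1:ℝ)) :=
    fun t => hdphix_cont.comp (continuous_const.prodMk continuous_id)
  have hαβ : a / 2 ≤ (1 + b) / 2 := by linarith [ha.2, hb.1]
  -- rewrite the integrand as F1 + F2
  have hsplit : (fun p : ℝ × ℝ => compression um up p.1 p.2 * fderiv ℝ φ p ((1:ℝ), (0:ℝ))
      + compression um up p.1 p.2 ^ 2 / 2 * fderiv ℝ φ p ((0:ℝ), (1:ℝ)))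
      = fun p => F1 p + F2 p := by
    funext p; simp only [hF1, hF2]; ring
  rw [hsplit, integral_add hF1int hF2int]
  -- the F1 integral vanishes
  have hint1 : ∫ p : ℝ × ℝ, F1 p = 0 := by
    have hF1int' : Integrable F1 ((volume : Measure ℝ).prod volume) := by
      rwa [← Measure.volume_eq_prod]
    rw [Measure.volume_eq_prod, MeasureTheory.integral_prod_symm _ hF1int']
    have hinner : ∀ x : ℝ, (∫ t : ℝ, F1 (t, x)) = 0 := by
      intro x
      have hsupp : ∀ t : ℝ, t ∉ Ioc (a/2) ((1+b)/2) → F1 (t, x) = 0 := by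
        intro t htm
        have hKm : (t, x) ∉ tsupport φ := by
          intro hc
          exact htm ⟨by linarith [(hKt _ hc).1, ha.1], by linarith [(hKt _ hc).2, hb.2]⟩
        simp only [hF1]
        rw [hφ0 _ hKm, hdphit0 _ hKm, mul_zero, mul_zero, add_zero]
      have hrw : (fun t : ℝ => F1 (t, x)) = (Ioc (a/2) ((1+b)/2)).indicator fun t => F1 (t, x) :=
        (indicator_eq_self.2 (Function.support_subset_iff'.2 hsupp)).symm
      rw [hrw, integral_indicator measurableSet_Ioc, ← intervalIntegral.integral_of_le hαβ]
      have hend1 : φ (a/2, x) = 0 :=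
        hφ0 _ fun hc => absurd (hKt _ hc).1 (by simp only; push_neg; linarith [ha.1])
      have hend2 : φ ((1+b)/2, x) = 0 :=
        hφ0 _ fun hc => absurd (hKt _ hc).2 (by simp only; push_neg; linarith [hb.2])
      rw [ftc2 (g := fun t => compression um up t x * φ (t, x)) (1 + x/um) (1 + x/up) hαβ
        ?_ ?_ ?_]
      · simp only [hend1, hend2, mul_zero, sub_self]
      · -- continuity
        exact (((comp_contOn_t h x).mono fun t ht =>
            lt_of_le_of_lt ht.2 (by linarith [hb.2] : (1+b)/2 < 1)).mul
          (hφT x).continuousOn)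
      · -- interval integrability of F1 slice
        have hterm2 : IntervalIntegrable
            (fun t => compression um up t x * fderiv ℝ φ (t, x) ((1:ℝ), (0:ℝ)))
            volume (a/2) ((1+b)/2) := by
          rw [intervalIntegrable_iff_integrableOn_Ioc_of_le hαβ]
          refine ContinuousOn.integrableOn_compact isCompact_Icc ?_ |>.mono_set Ioc_subset_Icc_self
          exact ((comp_contOn_t h x).mono fun t ht =>
              lt_of_le_of_lt ht.2 (by linarith [hb.2] : (1+b)/2 < 1)).mul
            (hdphitT x).continuousOn
        have hterm1 : IntervalIntegrable (fun t => ctFun um up (t, x) * φ (t, x))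
            volume (a/2) ((1+b)/2) := by
          rw [intervalIntegrable_iff_integrableOn_Ioc_of_le hαβ]
          refine Integrable.mono' (g := fun t => C0 * ‖φ (t, x)‖) ?_ ?_ ?_
          · exact ((continuous_const.mul (hφT x).norm)).integrableOn_Ioc
          · exact (((ctFun_meas um up).comp (measurable_id.prodMk measurable_const)).mul
              (hφT x).measurable).aestronglyMeasurable.restrict
          · exact Filter.Eventually.of_forall fun t => hbnd (t, x)
        have := hterm1.add hterm2
        simpa [hF1] using this
      · -- derivative
        intro t htm hc1 hc2
        have ht1 : t < 1 := lt_trans htm.2 (by linarith [hb.2])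
        have h1 : -x = (1 - t) * um → um = 0 := by
          intro he
          by_contra hum
          exact hc1 (by field_simp; linarith [he])
        have h2 : -x = (1 - t) * up → up = 0 := by
          intro he
          by_contra hup
          exact hc2 (by field_simp; linarith [he])
        have := (hasDerivAt_comp_t h ht1 h1 h2).mul (hφdT t x)
        simp only [hF1]
        exact this
    simp only [hinner, integral_zero]
  -- the F2 integral vanishes
  have hint2 : ∫ p : ℝ × ℝ, F2 p = 0 := by
    have hF2int' : Integrable F2 ((volume : Measure ℝ).prod volume) := by
      rwa [← Measure.volume_eq_prod]
    rw [Measure.volume_eq_prod, MeasureTheory.integral_prod _ hF2int']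
    have hinner : ∀ t : ℝ, (∫ x : ℝ, F2 (t, x)) = 0 := by
      intro t
      by_cases htK : t ∈ Icc a b
      · have ht1 : t < 1 := lt_of_le_of_lt htK.2 hb.2
        have hRR : -(R+1) ≤ R+1 := by linarith
        have hsupp : ∀ x : ℝ, x ∉ Ioc (-(R+1)) (R+1) → F2 (t, x) = 0 := by
          intro x hxm
          have hKm : (t, x) ∉ tsupport φ := by
            intro hc
            have hx := abs_le.1 (hKx _ hc)
            exact hxm ⟨by linarith [hx.1], by linarith [hx.2]⟩
          simp only [hF2]
          rw [hφ0 _ hKm, hdphix0 _ hKm, mul_zero, mul_zero, add_zero, neg_zero]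
        have hrw : (fun x : ℝ => F2 (t, x)) = (Ioc (-(R+1)) (R+1)).indicator fun x => F2 (t, x) :=
          (indicator_eq_self.2 (Function.support_subset_iff'.2 hsupp)).symm
        rw [hrw, integral_indicator measurableSet_Ioc, ← intervalIntegral.integral_of_le hRR]
        have hend1 : φ (t, -(R+1)) = 0 := by
          refine hφ0 _ fun hc => ?_
          have := hKx _ hc
          rw [abs_neg, abs_of_nonneg (by linarith : (0:ℝ) ≤ R+1)] at this
          linarith
        have hend2 : φ (t, R+1) = 0 := by
          refine hφ0 _ fun hc => ?_
          have := hKx _ hc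
          rw [abs_of_nonneg (by linarith : (0:ℝ) ≤ R+1)] at this
          linarith
        rw [ftc2 (g := fun x => compression um up t x ^ 2 / 2 * φ (t, x))
          (-((1 - t) * um)) (-((1 - t) * up)) hRR ?_ ?_ ?_]
        · simp only [hend1, hend2, mul_zero, sub_self]
        · exact (((comp_cont_x h ht1).pow 2).div_const 2).continuousOn.mul
            (hφX t).continuousOn
        · have hterm2 : IntervalIntegrable
              (fun x => compression um up t x ^ 2 / 2 * fderiv ℝ φ (t, x) ((0:ℝ), (1:ℝ)))
              volume (-(R+1)) (R+1) :=
            ((((comp_cont_x h ht1).pow 2).div_const 2).mul (hdphixX t)).intervalIntegrable _ _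
          have hterm1 : IntervalIntegrable (fun x => -(ctFun um up (t, x) * φ (t, x)))
              volume (-(R+1)) (R+1) := by
            refine IntervalIntegrable.neg ?_
            rw [intervalIntegrable_iff_integrableOn_Ioc_of_le hRR]
            refine Integrable.mono' (g := fun x => C0 * ‖φ (t, x)‖) ?_ ?_ ?_
            · exact ((continuous_const.mul (hφX t).norm)).integrableOn_Ioc
            · exact (((ctFun_meas um up).comp (measurable_const.prodMk measurable_id)).mul
                (hφX t).measurable).aestronglyMeasurable.restrict
            · exact Filter.Eventually.of_forall fun x => hbnd (t, x)
          have := hterm1.add hterm2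
          simpa [hF2] using this
        · intro x hxm hc1 hc2
          have h1 : -x ≠ (1 - t) * um := fun he => hc1 (by linarith [he])
          have h2 : -x ≠ (1 - t) * up := fun he => hc2 (by linarith [he])
          have : HasDerivAt (fun x => compression um up t x ^ 2 / 2 * φ (t, x))
              (-ctFun um up (t, x) * φ (t, x)
                + compression um up t x ^ 2 / 2 * fderiv ℝ φ (t, x) ((0:ℝ), (1:ℝ))) x :=
            (hasDerivAt_comp_x h ht1 h1 h2).mul (hφdX t x)
          simp only [hF2]
          convert this using 1
          ring
      · have hz : ∀ x : ℝ, F2 (t, x) = 0 := by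
          intro x
          have hKm : (t, x) ∉ tsupport φ := fun hc => htK ⟨(hKt _ hc).1, (hKt _ hc).2⟩
          simp only [hF2]
          rw [hφ0 _ hKm, hdphix0 _ hKm, mul_zero, mul_zero, add_zero, neg_zero]
        simp only [hz, integral_zero]
    simp only [hinner, integral_zero]
  rw [hint1, hint2, add_zero]
end
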